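/- (Saalschütz-type reduction via Thomae) For nonnegative integer n and parameters a, b, d, e with d, e, and 1+b-e-n avoiding nonpositive-integer degeneracies: sum over k of ((a)_k (b)_k (-n)_k)/(k! (d)_k (e)_k) = ((e-b)_n/(e)_n) * sum over k of ((-n)_k (b)_k (d-a)_k)/(k! (d)_k (1+b-e-n)_k), i.e., the Thomae transformation 3F2(a,b,-n; d,e; 1) = ((e-b)_n/(e)_n) · 3F2(-n, b, d-a; d, 1+b-e-n; 1). -/

import Mathlib

/-! Expand `(d - a)_k / (d)_k` by the Chu–Vandermonde identity
`∑_j (-1)^j C(k, j) (B)_j / (C)_j = (C - B)_k / (C)_k`, interchange the two sums, and sum the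
resulting inner series over `k` by Chu–Vandermonde once more; what is left is the prefactor
`(e - b)_n / (e)_n`, up to the reflection `(x)_k = (-1)^k (1 - x - k)_k`. Chu–Vandermonde itself is
the Vandermonde convolution for falling factorials, because `(-1)^k (B)_k` and `(C + k)_{m-k}` are
the falling factorials of length `k` at `-B` and of length `m - k` at `C + m - 1`. -/

/-- The Pochhammer symbol `(x)_k = x(x+1)⋯(x+k-1)`, `(x)_0 = 1`. -/
def poch (x : ℚ) (k : ℕ) : ℚ := ∏ i ∈ Finset.range k, (x + i)

open Finset Polynomial
open scoped Nat

lemma neg_one_pow_sq {R : Type*} [Monoid R] [HasDistribNeg R] (k : ℕ) :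
    ((-1 : R) ^ k) ^ 2 = 1 := by
  rw [← pow_mul, mul_comm, pow_mul, neg_one_sq, one_pow]

lemma sum_neg_one_pow_mul_choose_mul_sum_comm {R : Type*} [CommRing R] (n : ℕ) (x y : ℕ → R) :
    ∑ k ∈ range (n + 1), (-1) ^ k * n.choose k * x k *
        ∑ j ∈ range (k + 1), (-1) ^ j * k.choose j * y j =
      ∑ j ∈ range (n + 1), n.choose j * y j *
        ∑ m ∈ range (n - j + 1), (-1) ^ m * (n - j).choose m * x (j + m) := by
  set F : ℕ → ℕ → R := fun k j => (-1) ^ k * n.choose k * x k * ((-1) ^ j * k.choose j * y j)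
  have hflip := sum_range_diag_flip (n + 1) fun j m => F (j + m) j
  calc _ = ∑ k ∈ range (n + 1), ∑ j ∈ range (k + 1), F k j := by simp only [F, mul_sum]
    _ = ∑ j ∈ range (n + 1), ∑ m ∈ range (n + 1 - j), F (j + m) j := by
        rw [← hflip]
        refine sum_congr rfl fun k _ => sum_congr rfl fun j hj => ?_
        rw [Nat.add_sub_cancel' (mem_range_succ_iff.mp hj)]
    _ = _ := by
        refine sum_congr rfl fun j hj => ?_
        rw [Nat.sub_add_comm (mem_range_succ_iff.mp hj), mul_sum]
        refine sum_congr rfl fun m _ => ?_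
        have hchoose :
            (n.choose (j + m) : R) * (j + m).choose j = n.choose j * (n - j).choose m := by
          rw [← Nat.cast_mul, Nat.choose_mul (Nat.le_add_right j m), Nat.add_sub_cancel_left,
            Nat.cast_mul]
        calc F (j + m) j = ((-1) ^ j) ^ 2 * (-1) ^ m *
              (n.choose (j + m) * (j + m).choose j) * x (j + m) * y j := by
              simp only [F]
              ring
          _ = _ := by
              rw [neg_one_pow_sq, hchoose]
              ring

lemma poch_succ (x : ℚ) (k : ℕ) : poch x (k + 1) = poch x k * (x + k) :=
  prod_range_succ _ _

lemma poch_add (x : ℚ) (j m : ℕ) : poch x (j + m) = poch x j * poch (x + j) m := by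
  simp [poch, prod_range_add, add_assoc]

lemma poch_ne_zero_of_le {x : ℚ} {k n : ℕ} (hx : poch x n ≠ 0) (hk : k ≤ n) : poch x k ≠ 0 := by
  obtain ⟨m, rfl⟩ := Nat.exists_eq_add_of_le hk
  exact left_ne_zero_of_mul (poch_add x k m ▸ hx)

lemma poch_eq_ascPochhammer_eval (x : ℚ) (k : ℕ) : poch x k = (ascPochhammer ℚ k).eval x := by
  induction k with
  | zero => simp [poch]
  | succ k ih => rw [poch_succ, ih, ascPochhammer_succ_eval]

lemma poch_eq_descPochhammer_smeval (x : ℚ) (k : ℕ) :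
    poch x k = (descPochhammer ℤ k).smeval (x + k - 1) := by
  rw [descPochhammer_smeval_eq_ascPochhammer, ascPochhammer_smeval_eq_eval,
    poch_eq_ascPochhammer_eval]
  congr 1
  ring

lemma poch_reflect (x : ℚ) (k : ℕ) : poch x k = (-1) ^ k * poch (1 - x - k) k := by
  rw [poch_eq_ascPochhammer_eval, poch_eq_ascPochhammer_eval, ← neg_neg x,
    ascPochhammer_eval_neg_eq_descPochhammer, descPochhammer_eval_eq_ascPochhammer]
  ring_nf

lemma poch_neg_natCast (m k : ℕ) : poch (-m) k = (-1) ^ k * k ! * m.choose k := by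
  rw [poch_reflect, poch_eq_descPochhammer_smeval, show 1 - -(m : ℚ) - k + k - 1 = m by ring,
    descPochhammer_smeval_eq_descFactorial, Nat.descFactorial_eq_factorial_mul_choose]
  push_cast
  ring

lemma poch_sub_eq_sum_choose_mul_poch_mul_poch (m : ℕ) (B C : ℚ) :
    poch (C - B) m =
      ∑ k ∈ range (m + 1), (-1) ^ k * m.choose k * poch B k * poch (C + k) (m - k) := by
  rw [poch_eq_descPochhammer_smeval, show C - B + m - 1 = -B + (C + m - 1) by ring,
    Ring.descPochhammer_smeval_add _ (Commute.all _ _),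
    Nat.sum_antidiagonal_eq_sum_range_succ_mk]
  refine sum_congr rfl fun k hk => ?_
  have hkm : k ≤ m := mem_range_succ_iff.mp hk
  rw [poch_reflect B, poch_eq_descPochhammer_smeval, poch_eq_descPochhammer_smeval,
    Nat.cast_sub hkm, show 1 - B - k + k - 1 = -B by ring, show C + k + (m - k) - 1 = C + m - 1 by ring]
  linear_combination (-↑(m.choose k) * (descPochhammer ℤ k).smeval (-B) *
    (descPochhammer ℤ (m - k)).smeval (C + m - 1)) * neg_one_pow_sq (R := ℚ) k

lemma sum_choose_mul_poch_div_poch (m : ℕ) (B : ℚ) {C : ℚ} (hC : poch C m ≠ 0) :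
    ∑ k ∈ range (m + 1), (-1) ^ k * m.choose k * (poch B k / poch C k) =
      poch (C - B) m / poch C m := by
  rw [eq_div_iff hC, sum_mul, poch_sub_eq_sum_choose_mul_poch_mul_poch]
  refine sum_congr rfl fun k hk => ?_
  have hkm : k ≤ m := mem_range_succ_iff.mp hk
  have hsplit : poch C m = poch C k * poch (C + k) (m - k) := by
    rw [← poch_add, Nat.add_sub_cancel' hkm]
  rw [hsplit]
  field_simp [poch_ne_zero_of_le hC hkm]

lemma sum_choose_mul_poch_add_div_poch_add (j m : ℕ) (b : ℚ) {f : ℚ} (hf : poch f (j + m) ≠ 0) :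
    ∑ i ∈ range (m + 1), (-1) ^ i * m.choose i * (poch b (j + i) / poch f (j + i)) =
      poch b j * poch (f - b) m / poch f (j + m) := by
  rw [poch_add f j m] at hf ⊢
  obtain ⟨hfj, hfjm⟩ := mul_ne_zero_iff.mp hf
  have hterm : ∀ i ∈ range (m + 1),
      (-1) ^ i * m.choose i * (poch b (j + i) / poch f (j + i)) =
        poch b j / poch f j * ((-1) ^ i * m.choose i * (poch (b + j) i / poch (f + j) i)) := by
    intro i hi
    have hfji : poch (f + j) i ≠ 0 := poch_ne_zero_of_le hfjm (mem_range_succ_iff.mp hi)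
    rw [poch_add, poch_add]
    field_simp
  rw [sum_congr rfl hterm, ← mul_sum, sum_choose_mul_poch_div_poch _ _ hfjm,
    show f + j - (b + j) = f - b by ring]
  field_simp

lemma poch_sub_div_poch_mul_poch_div_poch {n j : ℕ} (hj : j ≤ n) (b : ℚ) {e : ℚ}
    (he : poch e n ≠ 0) (hf : poch (1 + b - e - n) n ≠ 0) :
    poch (e - b) n / poch e n * (poch (1 - e - n) (n - j) / poch (1 + b - e - n) n) =
      (-1) ^ j / poch e j := by
  have hnum : poch (e - b) n = (-1) ^ j * (-1) ^ (n - j) * poch (1 + b - e - n) n := by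
    rw [poch_reflect (e - b), ← pow_add, Nat.add_sub_cancel' hj,
      show 1 - (e - b) - n = 1 + b - e - n by ring]
  have hden : poch e n = poch e j * ((-1) ^ (n - j) * poch (1 - e - n) (n - j)) := by
    have hsplit := poch_add e j (n - j)
    rw [Nat.add_sub_cancel' hj] at hsplit
    rw [hsplit, poch_reflect (e + j), Nat.cast_sub hj,
      show 1 - (e + j) - (n - j) = 1 - e - n by ring]
  rw [hden] at he
  obtain ⟨hej, hrefl⟩ := mul_ne_zero_iff.mp he
  have hP := right_ne_zero_of_mul hrefl
  rw [hnum, hden]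
  field_simp

/-- Thomae's transformation for terminating balanced `₃F₂` series at argument `1`:
`₃F₂(a, b, -n; d, e; 1) = ((e-b)_n/(e)_n) · ₃F₂(-n, b, d-a; d, 1+b-e-n; 1)`,
valid for a nonnegative integer `n` whenever the denominator parameters avoid
nonpositive-integer degeneracies in the range of summation. -/
theorem thomae_transformation (n : ℕ) (a b d e : ℚ)
    (hd : ∀ k ≤ n, poch d k ≠ 0) (he : ∀ k ≤ n, poch e k ≠ 0)
    (hf : ∀ k ≤ n, poch (1 + b - e - (n : ℚ)) k ≠ 0) :
    ∑ k ∈ Finset.range (n + 1),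
        (poch a k * poch b k * poch (-(n : ℚ)) k) /
          ((Nat.factorial k : ℚ) * poch d k * poch e k) =
      (poch (e - b) n / poch e n) *
        ∑ k ∈ Finset.range (n + 1),
          (poch (-(n : ℚ)) k * poch b k * poch (d - a) k) /
            ((Nat.factorial k : ℚ) * poch d k * poch (1 + b - e - (n : ℚ)) k) := by
  set f : ℚ := 1 + b - e - n
  have hfn : poch f n ≠ 0 := hf n le_rfl
  have hchu : ∀ k ∈ range (n + 1),
      poch (-n) k * poch b k * poch (d - a) k / (k ! * poch d k * poch f k) =
        (-1) ^ k * n.choose k * (poch b k / poch f k) *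
          ∑ j ∈ range (k + 1), (-1) ^ j * k.choose j * (poch a j / poch d j) := by
    intro k hk
    have hdk := hd k (mem_range_succ_iff.mp hk)
    have hk! : (k ! : ℚ) ≠ 0 := by positivity
    rw [sum_choose_mul_poch_div_poch k a hdk, poch_neg_natCast]
    field_simp
  rw [sum_congr rfl hchu, sum_neg_one_pow_mul_choose_mul_sum_comm, mul_sum]
  refine sum_congr rfl fun j hj => ?_
  have hjn : j ≤ n := mem_range_succ_iff.mp hj
  rw [sum_choose_mul_poch_add_div_poch_add j (n - j) b (by rwa [Nat.add_sub_cancel' hjn]),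
    Nat.add_sub_cancel' hjn, show f - b = 1 - e - n by ring]
  have hj! : (j ! : ℚ) ≠ 0 := by positivity
  have hdj := hd j hjn
  have hej := he j hjn
  calc poch a j * poch b j * poch (-n) j / (j ! * poch d j * poch e j)
      = (-1) ^ j / poch e j * (n.choose j * (poch a j / poch d j) * poch b j) := by
        rw [poch_neg_natCast]
        field_simp
    _ = _ := by
        rw [← poch_sub_div_poch_mul_poch_div_poch hjn b (he n le_rfl) hfn]
        ring
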